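/- Let m be a positive integer and let x₁, x be reals with 1 < x₁ < x. Then ∑_{x₁ < n ≤ x, n squarefree, gcd(n,m)=1} 1/n = log(x/x₁) · (∑_{l | m} μ(l)/l) · (∑_{k ≤ √x, gcd(k,m)=1} μ(k)/k²) + θ · d(m*) · √x · (1/x₁ + 1/x) for some real θ with |θ| ≤ 1, where m* denotes the squarefree kernel (largest squarefree divisor) of m and d denotes the number-of-divisors function. -/

import Mathlib

/-!
For `n ≠ 0`, `μ²(n) = ∑_{d² ∣ n} μ(d)` and `[(n, m) = 1] = ∑_{l ∣ (m, n)} μ(l)`; when `n ≤ x` is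
coprime to `m`, the `d` that occur are coprime to `m` and at most `√x`. Swapping the sums leaves,
for each pair `(d, l)`, `μ(d) μ(l) / (d² l)` times a harmonic sum over `(x₁ / d²l, x / d²l]`, which
is `log (x / x₁)` up to an error of at most `d² l / x₁`. Summed over `d ≤ √x` and the squarefree
`l ∣ m`, the errors give `√x · d(m*) / x₁`.
-/

open Finset ArithmeticFunction

lemma log_sub_log_le_sum_Ioc_inv {A B : ℕ} (hAB : A ≤ B) :
    Real.log (B + 1) - Real.log (A + 1) ≤ ∑ n ∈ Ioc A B, (n : ℝ)⁻¹ := by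
  induction B, hAB using Nat.le_induction with
  | base => simp
  | succ B hAB ih =>
    rw [sum_Ioc_succ_top hAB]
    have hB : (0 : ℝ) < B + 1 := by positivity
    have := Real.log_le_sub_one_of_pos (x := (B + 1 + 1) / (B + 1)) (by positivity)
    rw [Real.log_div (by positivity) hB.ne'] at this
    push_cast
    have e : (B + 1 + 1 : ℝ) / (B + 1) - 1 = (B + 1 : ℝ)⁻¹ := by field_simp; ring
    linarith

lemma sum_Ioc_inv_le_log_sub_log {A B : ℕ} (hA : 0 < A) (hAB : A ≤ B) :
    ∑ n ∈ Ioc A B, (n : ℝ)⁻¹ ≤ Real.log B - Real.log A := by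
  induction B, hAB using Nat.le_induction with
  | base => simp
  | succ B hAB ih =>
    rw [sum_Ioc_succ_top hAB]
    have hB : (0 : ℝ) < B := by exact_mod_cast hA.trans_le hAB
    have := Real.one_sub_inv_le_log_of_pos (x := (B + 1) / B) (by positivity)
    rw [Real.log_div (by positivity) hB.ne', inv_div] at this
    push_cast
    have e : 1 - (B : ℝ) / (B + 1) = (B + 1 : ℝ)⁻¹ := by field_simp; ring
    linarith

lemma abs_sum_Ioc_floor_inv_sub_log_le {a b : ℝ} (ha : 0 < a) (hab : a ≤ b) :
    |∑ n ∈ Ioc ⌊a⌋₊ ⌊b⌋₊, (n : ℝ)⁻¹ - Real.log (b / a)| ≤ a⁻¹ := by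
  have hb : 0 < b := ha.trans_le hab
  have hAB : ⌊a⌋₊ ≤ ⌊b⌋₊ := Nat.floor_le_floor hab
  have ha_lt : a < ⌊a⌋₊ + 1 := Nat.lt_floor_add_one a
  rw [abs_le, Real.log_div hb.ne' ha.ne']
  constructor
  · have hsum := log_sub_log_le_sum_Ioc_inv hAB
    have hlogb : Real.log b ≤ Real.log (⌊b⌋₊ + 1) := Real.log_le_log hb (Nat.lt_floor_add_one b).le
    have hloga : Real.log (⌊a⌋₊ + 1) - Real.log a ≤ a⁻¹ := by
      have := Real.log_le_sub_one_of_pos (x := (⌊a⌋₊ + 1) / a) (by positivity)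
      rw [Real.log_div (by positivity) ha.ne', div_sub_one ha.ne', div_eq_mul_inv] at this
      nlinarith [Nat.floor_le ha.le, inv_pos.2 ha]
    linarith
  · rcases hAB.eq_or_lt with h | h
    · rw [h, Ioc_self, sum_empty]
      linarith [Real.log_le_log ha hab, inv_pos.2 ha]
    · rw [← Icc_add_one_left_eq_Ioc, ← Ioc_insert_left h, sum_insert (by simp)]
      have hsum := sum_Ioc_inv_le_log_sub_log (A := ⌊a⌋₊ + 1) (by omega) h
      have hfirst : ((⌊a⌋₊ + 1 : ℕ) : ℝ)⁻¹ ≤ a⁻¹ := by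
        push_cast; exact inv_anti₀ ha ha_lt.le
      have hloga : Real.log a ≤ Real.log (⌊a⌋₊ + 1) := Real.log_le_log ha ha_lt.le
      have hlogb : Real.log ⌊b⌋₊ ≤ Real.log b :=
        Real.log_le_log (by exact_mod_cast (by omega : 0 < ⌊b⌋₊)) (Nat.floor_le hb.le)
      push_cast at hsum
      linarith

lemma abs_sum_Ioc_floor_div_inv_sub_log_le {x₁ x : ℝ} (hx₁ : 0 < x₁) (hx : x₁ ≤ x) {c : ℕ}
    (hc : c ≠ 0) :
    |∑ s ∈ Ioc (⌊x₁⌋₊ / c) (⌊x⌋₊ / c), (s : ℝ)⁻¹ - Real.log (x / x₁)| ≤ c / x₁ := by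
  have hc' : (0 : ℝ) < c := by exact_mod_cast Nat.pos_of_ne_zero hc
  have h := abs_sum_Ioc_floor_inv_sub_log_le (div_pos hx₁ hc')
    (div_le_div_of_nonneg_right hx hc'.le)
  rwa [Nat.floor_div_natCast, Nat.floor_div_natCast, div_div_div_cancel_right₀ hc'.ne',
    inv_div] at h

lemma Nat.Ioc_filter_dvd_eq_map {c : ℕ} (hc : c ≠ 0) (A B : ℕ) :
    {n ∈ Ioc A B | c ∣ n} = (Ioc (A / c) (B / c)).map ⟨(c * ·), mul_right_injective₀ hc⟩ := by
  ext n
  simp only [mem_filter, mem_Ioc, mem_map, Function.Embedding.coeFn_mk]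
  constructor
  · rintro ⟨⟨hA, hB⟩, s, rfl⟩
    refine ⟨s, ⟨?_, ?_⟩, rfl⟩
    · rw [Nat.div_lt_iff_lt_mul (Nat.pos_of_ne_zero hc)]; linarith
    · rw [Nat.le_div_iff_mul_le (Nat.pos_of_ne_zero hc)]; linarith
  · rintro ⟨s, ⟨hA, hB⟩, rfl⟩
    rw [Nat.div_lt_iff_lt_mul (Nat.pos_of_ne_zero hc)] at hA
    rw [Nat.le_div_iff_mul_le (Nat.pos_of_ne_zero hc)] at hB
    exact ⟨⟨by linarith, by linarith⟩, dvd_mul_right c s⟩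

lemma sum_Ioc_filter_dvd_inv {c : ℕ} (hc : c ≠ 0) (A B : ℕ) :
    ∑ n ∈ Ioc A B with c ∣ n, (n : ℝ)⁻¹ = (c : ℝ)⁻¹ * ∑ s ∈ Ioc (A / c) (B / c), (s : ℝ)⁻¹ := by
  simp [Nat.Ioc_filter_dvd_eq_map hc, mul_sum, mul_comm]

lemma sum_divisors_moebius {R : Type*} [Ring R] (n : ℕ) :
    ∑ d ∈ n.divisors, (moebius d : R) = if n = 1 then 1 else 0 := by
  rw [← one_apply, ← coe_moebius_mul_coe_zeta, coe_mul_zeta_apply]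
  simp only [intCoe_apply]

lemma Nat.sq_dvd_sq_mul_iff {a b d : ℕ} (ha : Squarefree a) (hb : b ≠ 0) :
    d ^ 2 ∣ b ^ 2 * a ↔ d ∣ b := by
  refine ⟨fun h => ?_, fun h => (pow_dvd_pow_of_dvd h 2).mul_right a⟩
  obtain ⟨d', b', hcop, hd, hb'⟩ := Nat.exists_coprime d b
  have hg : 0 < d.gcd b := Nat.gcd_pos_of_pos_right d (Nat.pos_of_ne_zero hb)
  generalize d.gcd b = g at hd hb' hg
  subst hd hb'
  rw [mul_pow, mul_pow, mul_right_comm, Nat.mul_dvd_mul_iff_right (by positivity)] at h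
  have : d' = 1 := Nat.isUnit_iff.mp <| ha d' <| by
    rw [← sq]; exact (hcop.pow 2 2).dvd_of_dvd_mul_left h
  simp [this]

lemma sum_moebius_sq_dvd {R : Type*} [Ring R] {n : ℕ} (hn : n ≠ 0) :
    ∑ d ∈ n.divisors with d ^ 2 ∣ n, (moebius d : R) = if Squarefree n then 1 else 0 := by
  obtain ⟨a, b, rfl, ha⟩ := Nat.sq_mul_squarefree n
  have hb : b ≠ 0 := by rintro rfl; simp at hn
  have hset : {d ∈ (b ^ 2 * a).divisors | d ^ 2 ∣ b ^ 2 * a} = b.divisors := by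
    ext d
    simp only [mem_filter, Nat.mem_divisors, Nat.sq_dvd_sq_mul_iff ha hb]
    exact ⟨fun ⟨_, h⟩ => ⟨h, hb⟩, fun ⟨h, _⟩ => ⟨⟨(dvd_pow_self d two_ne_zero).trans
      ((Nat.sq_dvd_sq_mul_iff ha hb).2 h), hn⟩, h⟩⟩
  rw [hset, sum_divisors_moebius]
  congr 1
  refine propext ⟨fun h => by simpa [h] using ha, fun h => ?_⟩
  exact Nat.isUnit_iff.mp (h b ⟨a, by ring⟩)

lemma sum_moebius_divisors_dvd {R : Type*} [Ring R] {m : ℕ} (hm : m ≠ 0) (n : ℕ) :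
    ∑ l ∈ m.divisors with l ∣ n, (moebius l : R) = if n.Coprime m then 1 else 0 := by
  have hset : {l ∈ m.divisors | l ∣ n} = (m.gcd n).divisors := by
    ext l
    simp [Nat.dvd_gcd_iff, hm]
  simp [hset, sum_divisors_moebius, Nat.coprime_iff_gcd_eq_one, Nat.gcd_comm]

lemma sum_abs_moebius_divisors_le (m : ℕ) :
    ∑ l ∈ m.divisors, |(moebius l : ℝ)| ≤ (∏ p ∈ m.primeFactors, p).divisors.card := by
  have habs : ∀ l ∈ m.divisors, |(moebius l : ℝ)| = if Squarefree l then 1 else 0 := by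
    intro l _
    split_ifs with h
    · exact_mod_cast abs_moebius_eq_one_of_squarefree h
    · simp [moebius_eq_zero_of_not_squarefree h]
  have hsub : {l ∈ m.divisors | Squarefree l} ⊆ (∏ p ∈ m.primeFactors, p).divisors := by
    intro l hl
    obtain ⟨hlm, hsf⟩ := mem_filter.1 hl
    obtain ⟨hlm, hm⟩ := Nat.mem_divisors.1 hlm
    have hrad : ∏ p ∈ m.primeFactors, p ≠ 0 :=
      ne_zero_of_dvd_ne_zero hm (Nat.prod_primeFactors_dvd m)
    refine Nat.mem_divisors.2 ⟨?_, hrad⟩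
    rw [← Nat.prod_primeFactors_of_squarefree hsf]
    exact prod_dvd_prod_of_subset _ _ _ (Nat.primeFactors_mono hlm hm)
  rw [sum_congr rfl habs, ← sum_filter, sum_const, nsmul_one]
  exact_mod_cast card_le_card hsub

lemma ite_squarefree_and_coprime_eq_sum {R : Type*} [Ring R] {m n K : ℕ} (hm : m ≠ 0)
    (hn : n ≠ 0) (hK : n.sqrt ≤ K) :
    (if Squarefree n ∧ n.Coprime m then 1 else 0 : R) =
      ∑ d ∈ Icc 1 K with d.Coprime m, ∑ l ∈ m.divisors,
        if d ^ 2 * l ∣ n then (moebius d * moebius l : R) else 0 := by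
  have hsplit : ∀ d ∈ {d ∈ Icc 1 K | d.Coprime m}, ∀ l ∈ m.divisors,
      (if d ^ 2 * l ∣ n then (moebius d * moebius l : R) else 0) =
        (if d ^ 2 ∣ n then (moebius d : R) else 0) * (if l ∣ n then (moebius l : R) else 0) := by
    intro d hd l hl
    have hcop : (d ^ 2).Coprime l :=
      ((mem_filter.1 hd).2.pow_left 2).coprime_dvd_right (Nat.dvd_of_mem_divisors hl)
    have hdvd : d ^ 2 * l ∣ n ↔ d ^ 2 ∣ n ∧ l ∣ n :=
      ⟨fun h => ⟨dvd_of_mul_right_dvd h, dvd_of_mul_left_dvd h⟩,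
        fun ⟨h₁, h₂⟩ => hcop.mul_dvd_of_dvd_of_dvd h₁ h₂⟩
    rw [ite_zero_mul_ite_zero, if_congr hdvd rfl rfl]
  rw [sum_congr rfl fun d hd => sum_congr rfl (hsplit d hd), ← sum_mul_sum, ← sum_filter,
    ← sum_filter, sum_moebius_divisors_dvd hm, filter_filter]
  by_cases hcop : n.Coprime m
  · have hset : {d ∈ Icc 1 K | d.Coprime m ∧ d ^ 2 ∣ n} = {d ∈ n.divisors | d ^ 2 ∣ n} := by
      ext d
      simp only [mem_filter, mem_Icc, Nat.mem_divisors]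
      constructor
      · rintro ⟨-, -, hdn⟩
        exact ⟨⟨(dvd_pow_self d two_ne_zero).trans hdn, hn⟩, hdn⟩
      · rintro ⟨⟨hdn, -⟩, hdn2⟩
        exact ⟨⟨Nat.pos_of_dvd_of_pos hdn (Nat.pos_of_ne_zero hn),
          (Nat.le_sqrt'.2 (Nat.le_of_dvd (Nat.pos_of_ne_zero hn) hdn2)).trans hK⟩,
          hcop.coprime_dvd_left hdn, hdn2⟩
    rw [if_pos hcop, hset, sum_moebius_sq_dvd hn, mul_one]
    exact if_congr (and_iff_left hcop) rfl rfl
  · simp [hcop]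

lemma sum_Ioc_squarefree_coprime_inv_eq {m K : ℕ} (hm : m ≠ 0) (A B : ℕ) (hK : B.sqrt ≤ K) :
    ∑ n ∈ Ioc A B with Squarefree n ∧ n.Coprime m, (n : ℝ)⁻¹ =
      ∑ d ∈ Icc 1 K with d.Coprime m, ∑ l ∈ m.divisors,
        moebius d * moebius l / ((d ^ 2 * l : ℕ) : ℝ) *
          ∑ s ∈ Ioc (A / (d ^ 2 * l)) (B / (d ^ 2 * l)), (s : ℝ)⁻¹ := by
  calc ∑ n ∈ Ioc A B with Squarefree n ∧ n.Coprime m, (n : ℝ)⁻¹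
      = ∑ n ∈ Ioc A B, (if Squarefree n ∧ n.Coprime m then 1 else 0 : ℝ) * (n : ℝ)⁻¹ := by
        simp [sum_filter]
    _ = ∑ n ∈ Ioc A B, ∑ d ∈ Icc 1 K with d.Coprime m, ∑ l ∈ m.divisors,
          (if d ^ 2 * l ∣ n then (moebius d * moebius l : ℝ) else 0) * (n : ℝ)⁻¹ := by
        refine sum_congr rfl fun n hn => ?_
        obtain ⟨hAn, hnB⟩ := mem_Ioc.1 hn
        rw [ite_squarefree_and_coprime_eq_sum hm (by omega) ((Nat.sqrt_le_sqrt hnB).trans hK)]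
        simp only [sum_mul]
    _ = ∑ d ∈ Icc 1 K with d.Coprime m, ∑ l ∈ m.divisors,
          moebius d * moebius l * ∑ n ∈ Ioc A B with d ^ 2 * l ∣ n, (n : ℝ)⁻¹ := by
        rw [sum_comm]
        refine sum_congr rfl fun d _ => ?_
        rw [sum_comm]
        simp [sum_filter, mul_sum, ite_mul]
    _ = _ := by
        refine sum_congr rfl fun d hd => sum_congr rfl fun l hl => ?_
        have hd0 : d ≠ 0 := by simp at hd; omega
        rw [sum_Ioc_filter_dvd_inv (by simp [hd0, Nat.ne_of_gt (Nat.pos_of_mem_divisors hl)]),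
          div_eq_mul_inv]
        ring

lemma abs_sum_Ioc_squarefree_coprime_inv_sub_le {m : ℕ} (hm : m ≠ 0) {x₁ x : ℝ} (hx₁ : 0 < x₁)
    (hx : x₁ ≤ x) :
    |∑ n ∈ Ioc ⌊x₁⌋₊ ⌊x⌋₊ with Squarefree n ∧ n.Coprime m, (n : ℝ)⁻¹ -
        Real.log (x / x₁) * (∑ l ∈ m.divisors, (moebius l : ℝ) / l) *
          ∑ k ∈ Icc 1 ⌊√x⌋₊ with k.Coprime m, (moebius k : ℝ) / (k : ℝ) ^ 2| ≤
      √x * (∏ p ∈ m.primeFactors, p).divisors.card / x₁ := by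
  set D := {k ∈ Icc 1 ⌊√x⌋₊ | k.Coprime m}
  set L := Real.log (x / x₁)
  have hK : Nat.sqrt ⌊x⌋₊ ≤ ⌊√x⌋₊ := by
    rw [← Real.nat_floor_real_sqrt_eq_nat_sqrt]
    exact Nat.floor_le_floor (Real.sqrt_le_sqrt (Nat.floor_le (hx₁.le.trans hx)))
  have hmain : L * (∑ l ∈ m.divisors, (moebius l : ℝ) / l) *
      ∑ d ∈ D, (moebius d : ℝ) / (d : ℝ) ^ 2 =
        ∑ d ∈ D, ∑ l ∈ m.divisors, moebius d * moebius l / ((d ^ 2 * l : ℕ) : ℝ) * L := by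
    rw [mul_comm, mul_comm L, ← mul_assoc, sum_mul_sum, sum_mul]
    refine sum_congr rfl fun d _ => ?_
    rw [sum_mul]
    refine sum_congr rfl fun l _ => ?_
    push_cast
    ring
  have hterm : ∀ d ∈ D, ∀ l ∈ m.divisors,
      |moebius d * moebius l / ((d ^ 2 * l : ℕ) : ℝ) *
        (∑ s ∈ Ioc (⌊x₁⌋₊ / (d ^ 2 * l)) (⌊x⌋₊ / (d ^ 2 * l)), (s : ℝ)⁻¹ - L)| ≤
          |(moebius l : ℝ)| / x₁ := by
    intro d hd l hl
    have hc : d ^ 2 * l ≠ 0 := by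
      have : d ≠ 0 := by simp [D] at hd; omega
      simp [this, Nat.ne_of_gt (Nat.pos_of_mem_divisors hl)]
    have hc' : (0 : ℝ) < (d ^ 2 * l : ℕ) := by exact_mod_cast Nat.pos_of_ne_zero hc
    have hμd : |(moebius d : ℝ)| ≤ 1 := by exact_mod_cast abs_moebius_le_one
    rw [abs_mul, abs_div, abs_mul, abs_of_pos hc']
    calc |(moebius d : ℝ)| * |(moebius l : ℝ)| / ((d ^ 2 * l : ℕ) : ℝ) *
          |∑ s ∈ Ioc (⌊x₁⌋₊ / (d ^ 2 * l)) (⌊x⌋₊ / (d ^ 2 * l)), (s : ℝ)⁻¹ - L|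
        ≤ 1 * |(moebius l : ℝ)| / ((d ^ 2 * l : ℕ) : ℝ) * (((d ^ 2 * l : ℕ) : ℝ) / x₁) := by
          gcongr
          exact abs_sum_Ioc_floor_div_inv_sub_log_le hx₁ hx hc
      _ = |(moebius l : ℝ)| / x₁ := by field_simp
  have hcard : (#D : ℝ) ≤ √x := by
    calc (#D : ℝ) ≤ #(Icc 1 ⌊√x⌋₊) := by exact_mod_cast card_filter_le _ _
      _ = ⌊√x⌋₊ := by simp
      _ ≤ √x := Nat.floor_le (Real.sqrt_nonneg x)
  rw [sum_Ioc_squarefree_coprime_inv_eq hm _ _ hK, hmain, ← sum_sub_distrib]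
  simp only [← sum_sub_distrib, ← mul_sub]
  calc _ ≤ ∑ d ∈ D, ∑ l ∈ m.divisors, |(moebius l : ℝ)| / x₁ :=
        (abs_sum_le_sum_abs _ _).trans <| sum_le_sum fun d hd =>
          (abs_sum_le_sum_abs _ _).trans <| sum_le_sum fun l hl => hterm d hd l hl
    _ = #D * (∑ l ∈ m.divisors, |(moebius l : ℝ)|) / x₁ := by
        rw [sum_const, nsmul_eq_mul, ← sum_div, mul_div_assoc]
    _ ≤ _ := by
        gcongr
        exact sum_abs_moebius_divisors_le m

lemma exists_abs_le_one_eq_mul_of_abs_le {E c : ℝ} (h : |E| ≤ c) :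
    ∃ θ : ℝ, |θ| ≤ 1 ∧ E = θ * c := by
  rcases (abs_nonneg E).trans h |>.eq_or_lt with hc | hc
  · exact ⟨0, by simp, by simpa [← hc] using h⟩
  · exact ⟨E / c, by rwa [abs_div, abs_of_pos hc, div_le_one hc], by field_simp⟩

/-- Let `m ≥ 1` and `1 < x₁ < x`. Then
`∑_{x₁ < n ≤ x, n squarefree, (n,m)=1} 1/n
  = log(x/x₁) · (∑_{l ∣ m} μ(l)/l) · (∑_{k ≤ √x, (k,m)=1} μ(k)/k²)
    + θ · d(m*) · √x · (1/x₁ + 1/x)`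
for some `θ` with `|θ| ≤ 1`, where `m*` is the squarefree kernel of `m` and `d` the
number-of-divisors function. -/
theorem sum_one_div_squarefree_coprime (m : ℕ) (hm : 0 < m) (x₁ x : ℝ)
    (hx₁ : 1 < x₁) (hx : x₁ < x) :
    ∃ θ : ℝ, |θ| ≤ 1 ∧
      ∑ n ∈ (Finset.Ioc ⌊x₁⌋₊ ⌊x⌋₊).filter (fun n => Squarefree n ∧ n.Coprime m),
          (1 : ℝ) / (n : ℝ) =
        Real.log (x / x₁) * (∑ l ∈ m.divisors, (moebius l : ℝ) / (l : ℝ)) *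
            (∑ k ∈ (Finset.Icc 1 ⌊Real.sqrt x⌋₊).filter (fun k => k.Coprime m),
              (moebius k : ℝ) / (k : ℝ) ^ 2) +
          θ * ((∏ p ∈ m.primeFactors, p).divisors.card : ℝ) * Real.sqrt x *
            (1 / x₁ + 1 / x) := by
  have hx₁0 : 0 < x₁ := by linarith
  have hbound := abs_sum_Ioc_squarefree_coprime_inv_sub_le hm.ne' hx₁0 hx.le
  set δ : ℝ := ((∏ p ∈ m.primeFactors, p).divisors.card : ℝ)
  have hweaken : √x * δ / x₁ ≤ δ * √x * (1 / x₁ + 1 / x) := by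
    have : 0 ≤ δ * √x / x := by
      have : 0 < x := by linarith
      positivity
    calc √x * δ / x₁ = δ * √x / x₁ := by ring
      _ ≤ δ * √x / x₁ + δ * √x / x := le_add_of_nonneg_right this
      _ = δ * √x * (1 / x₁ + 1 / x) := by ring
  obtain ⟨θ, hθ, hE⟩ := exists_abs_le_one_eq_mul_of_abs_le (hbound.trans hweaken)
  refine ⟨θ, hθ, ?_⟩
  simp only [one_div] at hE ⊢
  rw [← sub_eq_iff_eq_add', hE]
  ring
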